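/- Let P ⊂ ℝ³ be a set of n ≥ 4 points in convex and general position. A segment uv with u, v ∈ P has depth exactly 1 if and only if uv is not an edge of conv(P) but there exists a point p ∈ P \ {u,v} such that uv is an edge of conv(P \ {p}). -/

import Mathlib

/-- Points of `ℝ³` as triples. -/
abbrev V3 : Type := ℝ × ℝ × ℝ

/-- The standard dot product on `ℝ³`. -/
def dot3 (a x : V3) : ℝ := a.1 * x.1 + a.2.1 * x.2.1 + a.2.2 * x.2.2

/-- Number of points of `P` strictly on the positive side of the plane `dot3 a • = c`. -/
noncomputable def sideGT (P : Finset V3) (a : V3) (c : ℝ) : ℕ :=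
  {x ∈ (P : Set V3) | c < dot3 a x}.ncard

/-- Number of points of `P` strictly on the negative side of the plane `dot3 a • = c`. -/
noncomputable def sideLT (P : Finset V3) (a : V3) (c : ℝ) : ℕ :=
  {x ∈ (P : Set V3) | dot3 a x < c}.ncard

/-- The segment `pq` has depth at least `k` with respect to `P`: every plane through
`p` and `q` has at least `k` points of `P` strictly on each of its two open sides. -/
def DepthAtLeast (P : Finset V3) (p q : V3) (k : ℕ) : Prop :=
  ∀ a : V3, a ≠ 0 → dot3 a p = dot3 a q →
    k ≤ sideGT P a (dot3 a p) ∧ k ≤ sideLT P a (dot3 a p)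

/-- The segment `pq` has depth exactly `k`: `k` is the smallest integer such that every
plane through `p` and `q` has at least `k` points of `P` strictly on each side. -/
def DepthEq (P : Finset V3) (p q : V3) (k : ℕ) : Prop :=
  DepthAtLeast P p q k ∧ ¬ DepthAtLeast P p q (k + 1)

/-- General position in `ℝ³`: no four points of `P` are coplanar. -/
def GenPos3 (P : Finset V3) : Prop :=
  ∀ s : Finset V3, s ⊆ P → s.card = 4 → ¬ Coplanar ℝ (s : Set V3)

/-- Convex position: every point of `P` is a vertex of the convex hull of `P`. -/
def ConvexPos3 (P : Finset V3) : Prop :=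
  ∀ p ∈ P, p ∉ convexHull ℝ ((P.erase p : Finset V3) : Set V3)

/-- `uv` is an edge of the convex hull of the finite set `S`: there is a supporting
plane through `u` and `v` containing no other point of `S`, with all remaining points
strictly on one side. -/
def HullEdge (S : Finset V3) (u v : V3) : Prop :=
  u ∈ S ∧ v ∈ S ∧ u ≠ v ∧
    ∃ a : V3, a ≠ 0 ∧ dot3 a u = dot3 a v ∧
      ∀ x ∈ S, x ≠ u → x ≠ v → dot3 a u < dot3 a x

/-!
A plane through `u` and `v` with one open side empty contains, by general position, at most one
further point `w`; turning it slightly about the line `uv` pushes `w` strictly to the occupied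
side, so `uv` is a hull edge. Hence `uv` has depth at least `1` exactly when it is not a hull
edge of `P`. A plane through `uv` with exactly one point `p` strictly on one side then weakly
supports `P \ {p}`, making `uv` a hull edge of `P \ {p}`; conversely the supporting plane of
such an edge has no point of `P` other than `p` strictly below it.
-/

lemma dot3_add_left (a b x : V3) : dot3 (a + b) x = dot3 a x + dot3 b x := by
  simp only [dot3, Prod.fst_add, Prod.snd_add]; ring

lemma dot3_smul_left (t : ℝ) (a x : V3) : dot3 (t • a) x = t * dot3 a x := by
  simp only [dot3, Prod.smul_fst, Prod.smul_snd, smul_eq_mul]; ring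

lemma dot3_neg_left (a x : V3) : dot3 (-a) x = -dot3 a x := by
  simp only [dot3, Prod.fst_neg, Prod.snd_neg]; ring

lemma dot3_sub_left (a b x : V3) : dot3 (a - b) x = dot3 a x - dot3 b x := by
  simp only [dot3, Prod.fst_sub, Prod.snd_sub]; ring

lemma dot3_add_right (a x y : V3) : dot3 a (x + y) = dot3 a x + dot3 a y := by
  simp only [dot3, Prod.fst_add, Prod.snd_add]; ring

lemma dot3_smul_right (a : V3) (t : ℝ) (x : V3) : dot3 a (t • x) = t * dot3 a x := by
  simp only [dot3, Prod.smul_fst, Prod.smul_snd, smul_eq_mul]; ring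

lemma dot3_sub_right (a x y : V3) : dot3 a (x - y) = dot3 a x - dot3 a y := by
  simp only [dot3, Prod.fst_sub, Prod.snd_sub]; ring

lemma dot3_self_pos {a : V3} (ha : a ≠ 0) : 0 < dot3 a a := by
  obtain ⟨a₁, a₂, a₃⟩ := a
  have : a₁ ≠ 0 ∨ a₂ ≠ 0 ∨ a₃ ≠ 0 := by
    by_contra! h
    exact ha (by simp [h.1, h.2.1, h.2.2])
  simp only [dot3]
  rcases this with h | h | h <;>
    nlinarith [mul_self_pos.2 h, mul_self_nonneg a₁, mul_self_nonneg a₂, mul_self_nonneg a₃]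

def dot3ₗ (a : V3) : Module.Dual ℝ V3 where
  toFun := dot3 a
  map_add' := dot3_add_right a
  map_smul' := dot3_smul_right a

lemma coplanar_of_forall_dot3_eq {a : V3} (ha : a ≠ 0) {c : ℝ} {s : Set V3}
    (hs : ∀ x ∈ s, dot3 a x = c) : Coplanar ℝ s := by
  have hspan : vectorSpan ℝ s ≤ LinearMap.ker (dot3ₗ a) := by
    rw [vectorSpan_def, Submodule.span_le]
    rintro _ ⟨x, hx, y, hy, rfl⟩
    simp [dot3ₗ, dot3_sub_right, hs x hx, hs y hy]
  have hne : dot3ₗ a ≠ 0 := fun h => (dot3_self_pos ha).ne' (LinearMap.congr_fun h a)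
  have hker : Module.finrank ℝ (LinearMap.ker (dot3ₗ a)) = 2 := by
    have := Module.Dual.finrank_ker_add_one_of_ne_zero hne
    simp only [Module.finrank_prod, Module.finrank_self] at this
    omega
  calc Module.rank ℝ (vectorSpan ℝ s) ≤ Module.rank ℝ (LinearMap.ker (dot3ₗ a)) :=
        Submodule.rank_mono hspan
    _ = 2 := by rw [← Module.finrank_eq_rank, hker]; rfl

lemma exists_dot3_eq_lt_of_not_collinear {u v w : V3} (h : ¬ Collinear ℝ {u, v, w}) :
    ∃ b, dot3 b u = dot3 b v ∧ dot3 b u < dot3 b w := by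
  set d := v - u
  set e := w - u
  have hd : d ≠ 0 := by
    intro hd
    rw [sub_eq_zero.mp hd, Set.insert_eq_of_mem (by simp)] at h
    exact h (collinear_pair ℝ u w)
  -- `b` is the component of `e` orthogonal to `d`: it vanishes on `d` and `dot3 b e = dot3 b b`.
  set t := dot3 e d / dot3 d d
  set b := e - t • d
  have hbd : dot3 b d = 0 := by
    have := (dot3_self_pos hd).ne'
    rw [dot3_sub_left, dot3_smul_left, div_mul_cancel₀ _ this, sub_self]
  have hb : b ≠ 0 := by
    intro hb0
    refine h ((collinear_iff_of_mem (p₀ := u) (by simp)).2 ⟨d, ?_⟩)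
    have hw : w = t • d + u := by rw [← sub_eq_zero.mp hb0]; simp [e]
    simp only [Set.mem_insert_iff, Set.mem_singleton_iff, vadd_eq_add]
    rintro p (rfl | rfl | rfl)
    exacts [⟨0, by simp⟩, ⟨1, by simp [d]⟩, ⟨t, hw⟩]
  have hbe : dot3 b e = dot3 b b := calc
    dot3 b e = dot3 b (b + t • d) := by rw [sub_add_cancel]
    _ = dot3 b b := by rw [dot3_add_right, dot3_smul_right, hbd, mul_zero, add_zero]
  refine ⟨b, ?_, ?_⟩
  · linarith [dot3_sub_right b v u]
  · linarith [dot3_sub_right b w u, dot3_self_pos hb]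

open Filter Topology in
lemma exists_pos_forall_dot3_lt_add_smul (S : Finset V3) (a b u : V3) :
    ∃ ε : ℝ, 0 < ε ∧
      ∀ x ∈ S, dot3 a u < dot3 a x → dot3 (a + ε • b) u < dot3 (a + ε • b) x := by
  have hnear : ∀ x ∈ S, ∀ᶠ ε in 𝓝 (0 : ℝ),
      dot3 a u < dot3 a x → dot3 (a + ε • b) u < dot3 (a + ε • b) x := by
    intro x _
    by_cases hlt : dot3 a u < dot3 a x
    · simp only [dot3_add_left, dot3_smul_left]
      exact (ContinuousAt.eventually_lt (by fun_prop) (by fun_prop) (by simpa using hlt)).mono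
        fun _ h _ => h
    · exact Eventually.of_forall fun _ h => absurd h hlt
  have hall := ((eventually_all_finset S).2 hnear).filter_mono
    (nhdsWithin_le_nhds (s := Set.Ioi 0))
  have hpos : ∀ᶠ ε in 𝓝[>] (0 : ℝ), 0 < ε := self_mem_nhdsWithin
  exact (hpos.and hall).exists

lemma GenPos3.not_coplanar {P : Finset V3} (hgen : GenPos3 P) {x u v w : V3}
    (hx : x ∈ P) (hu : u ∈ P) (hv : v ∈ P) (hw : w ∈ P) (hxu : x ≠ u) (hxv : x ≠ v)
    (hxw : x ≠ w) (huv : u ≠ v) (huw : u ≠ w) (hvw : v ≠ w) :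
    ¬ Coplanar ℝ ({x, u, v, w} : Set V3) := by
  simpa using hgen {x, u, v, w} (by simp [Finset.insert_subset_iff, *])
    (by simp [Finset.card_insert_of_notMem, *])

lemma GenPos3.not_collinear {P : Finset V3} (hcard : 4 ≤ P.card) (hgen : GenPos3 P)
    {u v w : V3} (hu : u ∈ P) (hv : v ∈ P) (hw : w ∈ P)
    (huv : u ≠ v) (huw : u ≠ w) (hvw : v ≠ w) :
    ¬ Collinear ℝ ({u, v, w} : Set V3) := by
  obtain ⟨z, hz, hzuvw⟩ := Finset.exists_mem_notMem_of_card_lt_card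
    ((Finset.card_le_three (a := u) (b := v) (c := w)).trans_lt hcard)
  simp only [Finset.mem_insert, Finset.mem_singleton, not_or] at hzuvw
  obtain ⟨hzu, hzv, hzw⟩ := hzuvw
  exact fun hcol => hgen.not_coplanar hz hu hv hw hzu hzv hzw huv huw hvw (hcol.coplanar_insert z)

lemma GenPos3.eq_of_dot3_eq {P : Finset V3} (hgen : GenPos3 P) {a : V3} (ha : a ≠ 0)
    {x u v w : V3} (hx : x ∈ P) (hu : u ∈ P) (hv : v ∈ P) (hw : w ∈ P) (hxu : x ≠ u)
    (hxv : x ≠ v) (huv : u ≠ v) (huw : u ≠ w) (hvw : v ≠ w)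
    (hauv : dot3 a u = dot3 a v) (hauw : dot3 a u = dot3 a w) (haux : dot3 a u = dot3 a x) :
    x = w := by
  by_contra hxw
  refine hgen.not_coplanar hx hu hv hw hxu hxv hxw huv huw hvw
    (coplanar_of_forall_dot3_eq ha (c := dot3 a u) ?_)
  simp [← hauv, ← hauw, ← haux]

lemma HullEdge.exists_forall_dot3_le {S : Finset V3} {u v : V3} (h : HullEdge S u v) :
    ∃ a, a ≠ 0 ∧ dot3 a u = dot3 a v ∧ ∀ x ∈ S, dot3 a u ≤ dot3 a x := by
  obtain ⟨-, -, -, a, ha, hauv, hlt⟩ := h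
  refine ⟨a, ha, hauv, fun x hx => ?_⟩
  by_cases hxu : x = u
  · rw [hxu]
  by_cases hxv : x = v
  · rw [hxv, hauv]
  exact (hlt x hx hxu hxv).le

lemma hullEdge_of_forall_dot3_le {P S : Finset V3} (hcard : 4 ≤ P.card) (hgen : GenPos3 P)
    (hS : S ⊆ P) {u v a : V3} (hu : u ∈ S) (hv : v ∈ S) (huv : u ≠ v) (ha : a ≠ 0)
    (hauv : dot3 a u = dot3 a v) (hle : ∀ x ∈ S, dot3 a u ≤ dot3 a x) :
    HullEdge S u v := by
  by_cases hplane : ∃ w ∈ S, w ≠ u ∧ w ≠ v ∧ dot3 a u = dot3 a w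
  · obtain ⟨w, hw, hwu, hwv, hauw⟩ := hplane
    obtain ⟨b, hbuv, hbuw⟩ := exists_dot3_eq_lt_of_not_collinear
      (hgen.not_collinear hcard (hS hu) (hS hv) (hS hw) huv hwu.symm hwv.symm)
    obtain ⟨ε, hε, hpres⟩ := exists_pos_forall_dot3_lt_add_smul S a b u
    have htilt : dot3 (a + ε • b) u < dot3 (a + ε • b) w := by
      simp only [dot3_add_left, dot3_smul_left, hauw]
      gcongr
    refine ⟨hu, hv, huv, a + ε • b, ?_, ?_, fun x hx hxu hxv => ?_⟩
    · intro h0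
      simp [h0, dot3] at htilt
    · simp only [dot3_add_left, dot3_smul_left, hauv, hbuv]
    · rcases (hle x hx).lt_or_eq with hlt | heq
      · exact hpres x hx hlt
      · rwa [hgen.eq_of_dot3_eq ha (hS hx) (hS hu) (hS hv) (hS hw) hxu hxv huv hwu.symm
          hwv.symm hauv hauw heq]
  · push Not at hplane
    exact ⟨hu, hv, huv, a, ha, hauv,
      fun x hx hxu hxv => (hle x hx).lt_of_ne (hplane x hx hxu hxv)⟩

lemma hullEdge_iff_exists_forall_dot3_le {P S : Finset V3} (hcard : 4 ≤ P.card)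
    (hgen : GenPos3 P) (hS : S ⊆ P) {u v : V3} (hu : u ∈ S) (hv : v ∈ S) (huv : u ≠ v) :
    HullEdge S u v ↔ ∃ a, a ≠ 0 ∧ dot3 a u = dot3 a v ∧ ∀ x ∈ S, dot3 a u ≤ dot3 a x :=
  ⟨HullEdge.exists_forall_dot3_le, fun ⟨_, ha, hauv, hle⟩ =>
    hullEdge_of_forall_dot3_le hcard hgen hS hu hv huv ha hauv hle⟩

lemma sideGT_eq_sideLT_neg (P : Finset V3) (a : V3) (c : ℝ) :
    sideGT P a c = sideLT P (-a) (-c) := by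
  simp only [sideGT, sideLT, dot3_neg_left, neg_lt_neg_iff]

lemma sideLT_eq_card_filter (P : Finset V3) (a : V3) (c : ℝ) :
    sideLT P a c = (P.filter fun x => dot3 a x < c).card := by
  rw [sideLT, ← Set.ncard_coe_finset, Finset.coe_filter]
  rfl

lemma one_le_sideLT_iff {P : Finset V3} {a : V3} {c : ℝ} :
    1 ≤ sideLT P a c ↔ ∃ x ∈ P, dot3 a x < c := by
  rw [sideLT_eq_card_filter, Finset.one_le_card, Finset.filter_nonempty_iff]

lemma sideLT_le_one_iff {P : Finset V3} {a : V3} {c : ℝ} :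
    sideLT P a c ≤ 1 ↔ ∃ p, ∀ x ∈ P, dot3 a x < c → x = p := by
  simp [sideLT_eq_card_filter, Finset.card_le_one_iff_subset_singleton, Finset.subset_iff]

lemma depthAtLeast_iff_forall_le_sideLT {P : Finset V3} {p q : V3} {k : ℕ} :
    DepthAtLeast P p q k ↔
      ∀ a, a ≠ 0 → dot3 a p = dot3 a q → k ≤ sideLT P a (dot3 a p) := by
  refine ⟨fun h a ha hapq => (h a ha hapq).2, fun h a ha hapq => ⟨?_, h a ha hapq⟩⟩
  rw [sideGT_eq_sideLT_neg, ← dot3_neg_left]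
  exact h (-a) (neg_ne_zero.2 ha) (by simp only [dot3_neg_left, hapq])

lemma depthAtLeast_one_iff_not_hullEdge {P : Finset V3} (hcard : 4 ≤ P.card)
    (hgen : GenPos3 P) {u v : V3} (hu : u ∈ P) (hv : v ∈ P) (huv : u ≠ v) :
    DepthAtLeast P u v 1 ↔ ¬ HullEdge P u v := by
  simp only [depthAtLeast_iff_forall_le_sideLT, one_le_sideLT_iff,
    hullEdge_iff_exists_forall_dot3_le hcard hgen subset_rfl hu hv huv]
  push Not
  rfl

lemma not_depthAtLeast_two_iff {P : Finset V3} {u v : V3} :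
    ¬ DepthAtLeast P u v 2 ↔
      ∃ a, a ≠ 0 ∧ dot3 a u = dot3 a v ∧ ∃ p, ∀ x ∈ P, dot3 a x < dot3 a u → x = p := by
  simp only [depthAtLeast_iff_forall_le_sideLT, ← sideLT_le_one_iff]
  push Not
  simp only [Nat.lt_succ_iff]

lemma hullEdge_erase_of_not_hullEdge {P : Finset V3} (hcard : 4 ≤ P.card) (hgen : GenPos3 P)
    {u v a p : V3} (hu : u ∈ P) (hv : v ∈ P) (huv : u ≠ v) (hne : ¬ HullEdge P u v)
    (ha : a ≠ 0) (hauv : dot3 a u = dot3 a v) (hp : ∀ x ∈ P, dot3 a x < dot3 a u → x = p) :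
    p ∈ P ∧ p ≠ u ∧ p ≠ v ∧ HullEdge (P.erase p) u v := by
  obtain ⟨x, hx, hxa⟩ := one_le_sideLT_iff.1 <|
    (depthAtLeast_one_iff_not_hullEdge hcard hgen hu hv huv).2 hne a ha hauv |>.2
  obtain rfl := hp x hx hxa
  have hxu : x ≠ u := ne_of_apply_ne (dot3 a) hxa.ne
  have hxv : x ≠ v := ne_of_apply_ne (dot3 a) (hauv ▸ hxa.ne)
  refine ⟨hx, hxu, hxv, hullEdge_of_forall_dot3_le hcard hgen (P.erase_subset x)
    (P.mem_erase.2 ⟨hxu.symm, hu⟩) (P.mem_erase.2 ⟨hxv.symm, hv⟩) huv ha hauv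
    fun y hy => ?_⟩
  obtain ⟨hyx, hy⟩ := P.mem_erase.1 hy
  exact not_lt.1 fun hya => hyx (hp y hy hya)

theorem stmt13_general (P : Finset V3) (n : ℕ) (hn : P.card = n) (hn4 : 4 ≤ n)
    (hgen : GenPos3 P)
    (u v : V3) (hu : u ∈ P) (hv : v ∈ P) (huv : u ≠ v) :
    DepthEq P u v 1 ↔
      ¬ HullEdge P u v ∧
        ∃ p ∈ P, p ≠ u ∧ p ≠ v ∧ HullEdge (P.erase p) u v := by
  subst hn
  rw [DepthEq, depthAtLeast_one_iff_not_hullEdge hn4 hgen hu hv huv, not_depthAtLeast_two_iff]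
  refine and_congr_right fun hne => ⟨?_, ?_⟩
  · rintro ⟨a, ha, hauv, p, hp⟩
    exact ⟨p, hullEdge_erase_of_not_hullEdge hn4 hgen hu hv huv hne ha hauv hp⟩
  · rintro ⟨p, -, -, -, hedge⟩
    obtain ⟨a, ha, hauv, hle⟩ := hedge.exists_forall_dot3_le
    exact ⟨a, ha, hauv, p, fun x hx hxa =>
      by_contra fun hxp => (hle x (Finset.mem_erase.2 ⟨hxp, hx⟩)).not_gt hxa⟩

/-- A segment `uv` has depth exactly `1` iff it is not a hull edge of `P` but becomes
a hull edge after deleting some single point `p`. -/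
theorem stmt13 (P : Finset V3) (n : ℕ) (hn : P.card = n) (hn4 : 4 ≤ n)
    (hgen : GenPos3 P) (hconv : ConvexPos3 P)
    (u v : V3) (hu : u ∈ P) (hv : v ∈ P) (huv : u ≠ v) :
    DepthEq P u v 1 ↔
      ¬ HullEdge P u v ∧
        ∃ p ∈ P, p ≠ u ∧ p ≠ v ∧ HullEdge (P.erase p) u v :=
  stmt13_general P n hn hn4 hgen u v hu hv huv
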